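/- Upper bound for linear anticodes: if C ≤ Π = ⊕_{i=1}^t F^{n_i × m_i} is a linear subspace with srk(X) ≤ r for all X ∈ C (with n_i ≤ m_i for all i), then dim(C) ≤ max{ Σ_{i=1}^t m_i u_i : u ∈ ℕ_0^t, 0 ≤ u_i ≤ n_i, Σ u_i = r }. -/

import Mathlib

/-!
Embed `C` block-diagonally into a space `V` of matrices with linearly ordered rows and columns.
Ordering positions row-major, the pivots of `V` (first nonzero positions of its elements) number
at least `dim V = dim C`. In block `i` the pivots form a bipartite graph between rows and columns;
by König's theorem it has a matching `Sᵢ` and a vertex cover by `|Sᵢ|` lines, so block `i` holds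
at most `|Sᵢ| mᵢ` pivots, as `nᵢ ≤ mᵢ`. The union of the `Sᵢ` is a set of pivots in distinct rows
and distinct columns; combining the echelon witnesses of these pivots one row at a time yields an
element of `C` whose restriction to those rows and columns is invertible, so `∑ |Sᵢ| ≤ r`.
Raising the `|Sᵢ|` to some `u ≤ n` with `∑ u = r` gives the bound.
-/

/-- The sum-rank of a tuple of matrices. -/
noncomputable def srk {F : Type*} [Field F] {t : ℕ} {n m : Fin t → ℕ}
    (X : ∀ i : Fin t, Matrix (Fin (n i)) (Fin (m i)) F) : ℕ :=
  ∑ i, (X i).rank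

open Finset Function

namespace Finset

variable {α β : Type*}

def IsMatching (S : Finset (α × β)) : Prop :=
  Set.InjOn Prod.fst (S : Set (α × β)) ∧ Set.InjOn Prod.snd (S : Set (α × β))

theorem IsMatching.card_le [Fintype α] {S : Finset (α × β)} (hS : S.IsMatching) :
    #S ≤ Fintype.card α :=
  card_le_card_of_injOn Prod.fst (fun _ _ => mem_univ _) hS.1

variable [DecidableEq α] [DecidableEq β]

theorem isMatching_image {ι : Type*} [Fintype ι] {σ : ι → α × β}
    (h₁ : Injective (Prod.fst ∘ σ)) (h₂ : Injective (Prod.snd ∘ σ)) :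
    (univ.image σ).IsMatching := by
  constructor <;>
  · rintro _ hx _ hy hxy
    obtain ⟨x, -, rfl⟩ := mem_image.1 hx
    obtain ⟨y, -, rfl⟩ := mem_image.1 hy
    first | rw [h₁ hxy] | rw [h₂ hxy]

/-- Hall's condition holds: trading a violating set of rows for its neighbourhood outside `C`
would give a smaller cover. -/
theorem exists_injective_of_minimal_cover [Fintype β] (r : α → β → Prop) {R : Finset α}
    {C : Finset β} (hcov : ∀ a b, r a b → a ∈ R ∨ b ∈ C)
    (hmin : ∀ R' C', (∀ a b, r a b → a ∈ R' ∨ b ∈ C') → #R + #C ≤ #R' + #C') :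
    ∃ f : R → β, Injective f ∧ ∀ x : R, r x (f x) ∧ f x ∉ C := by
  classical
  refine (Fintype.all_card_le_filter_rel_iff_exists_injective
    fun (x : R) b => r x b ∧ b ∉ C).1 fun A => ?_
  by_contra! hA
  set A' := A.map (Embedding.subtype _)
  set N : Finset β := {b | ∃ a ∈ A, r a b ∧ b ∉ C}
  have hA'R : A' ⊆ R := fun a ha => by
    obtain ⟨x, -, rfl⟩ := mem_map.1 ha
    exact x.2
  have hcov' : ∀ a b, r a b → a ∈ R \ A' ∨ b ∈ C ∪ N := by
    intro a b hab
    by_cases haA : a ∈ A'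
    · obtain ⟨x, hx, rfl⟩ := mem_map.1 haA
      by_cases hbC : b ∈ C
      · exact Or.inr (mem_union_left _ hbC)
      · exact Or.inr (mem_union_right _ (mem_filter.2 ⟨mem_univ _, x, hx, hab, hbC⟩))
    · rcases hcov a b hab with haR | hbC
      · exact Or.inl (mem_sdiff.2 ⟨haR, haA⟩)
      · exact Or.inr (mem_union_left _ hbC)
  have hA' : #A' = #A := card_map _
  have hsmaller := hmin _ _ hcov'
  rw [card_sdiff_of_subset hA'R, hA'] at hsmaller
  have := card_union_le C N
  have := card_le_card hA'R
  omega

variable [Fintype α] [Fintype β]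

theorem exists_isMatching_cover (P : Finset (α × β)) :
    ∃ S ⊆ P, S.IsMatching ∧
      ∃ (R : Finset α) (C : Finset β), (∀ p ∈ P, p.1 ∈ R ∨ p.2 ∈ C) ∧ #R + #C ≤ #S := by
  classical
  obtain ⟨⟨R, C⟩, hRC, hmin⟩ := exists_min_image
    (univ.filter fun RC : Finset α × Finset β => ∀ p ∈ P, p.1 ∈ RC.1 ∨ p.2 ∈ RC.2)
    (fun RC => #RC.1 + #RC.2) ⟨(univ, univ), by simp⟩
  have hcov : ∀ a b, (a, b) ∈ P → a ∈ R ∨ b ∈ C := fun a b h => (mem_filter.1 hRC).2 (a, b) h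
  have hmin' R' C' (h : ∀ a b, (a, b) ∈ P → a ∈ R' ∨ b ∈ C') : #R + #C ≤ #R' + #C' :=
    hmin (R', C') (mem_filter.2 ⟨mem_univ _, fun p hp => h p.1 p.2 hp⟩)
  obtain ⟨f, hf, hfP⟩ := exists_injective_of_minimal_cover (fun a b => (a, b) ∈ P) hcov hmin'
  obtain ⟨g, hg, hgP⟩ := exists_injective_of_minimal_cover (fun b a => (a, b) ∈ P)
    (fun b a h => (hcov a b h).symm)
    fun C' R' h => by
      rw [add_comm, add_comm #C']
      exact hmin' R' C' fun a b h' => (h b a h').symm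
  let σ : R ⊕ C → α × β := Sum.elim (fun x => (x, f x)) (fun y => (g y, y))
  have h₁ : Injective (Prod.fst ∘ σ) := by
    rw [Sum.comp_elim]
    exact Subtype.val_injective.sumElim hg fun x y (h : (x : α) = g y) => (hgP y).2 (h ▸ x.2)
  have h₂ : Injective (Prod.snd ∘ σ) := by
    rw [Sum.comp_elim]
    exact hf.sumElim Subtype.val_injective fun x y (h : f x = y) => (hfP x).2 (h ▸ y.2)
  refine ⟨univ.image σ, ?_, isMatching_image h₁ h₂, R, C, fun p hp => hcov p.1 p.2 hp, ?_⟩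
  · rintro _ hp
    obtain ⟨x | y, -, rfl⟩ := mem_image.1 hp
    exacts [(hfP x).1, (hgP y).1]
  · rw [card_image_of_injective _ h₁.of_comp, card_univ, Fintype.card_sum, Fintype.card_coe,
      Fintype.card_coe]

theorem exists_isMatching_card_le_mul (P : Finset (α × β))
    (h : Fintype.card α ≤ Fintype.card β) :
    ∃ S ⊆ P, S.IsMatching ∧ #P ≤ #S * Fintype.card β := by
  obtain ⟨S, hSP, hS, R, C, hcov, hRC⟩ := exists_isMatching_cover P
  refine ⟨S, hSP, hS, ?_⟩
  have hP : P ⊆ R ×ˢ univ ∪ univ ×ˢ C := fun p hp => by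
    rcases hcov p hp with h | h <;> simp [h]
  calc #P ≤ #R * Fintype.card β + Fintype.card α * #C := by
        simpa using (card_le_card hP).trans (card_union_le _ _)
    _ ≤ (#R + #C) * Fintype.card β := by nlinarith
    _ ≤ #S * Fintype.card β := Nat.mul_le_mul_right _ hRC

end Finset

theorem exists_le_le_sum_eq {ι : Type*} [Fintype ι] [DecidableEq ι] {v n : ι → ℕ}
    (hvn : v ≤ n) {r : ℕ} (hvr : ∑ i, v i ≤ r) (hrn : r ≤ ∑ i, n i) :
    ∃ u, v ≤ u ∧ u ≤ n ∧ ∑ i, u i = r := by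
  induction r, hvr using Nat.le_induction with
  | base => exact ⟨v, le_rfl, hvn, rfl⟩
  | succ r _ ih =>
    obtain ⟨u, hvu, hun, hur⟩ := ih (by omega)
    obtain ⟨i, hi⟩ : ∃ i, u i < n i := by
      by_contra! h
      have := sum_le_sum fun i (_ : i ∈ univ) => h i
      omega
    refine ⟨u + Pi.single i 1, hvu.trans le_self_add, fun j => ?_, ?_⟩
    · obtain rfl | hj := eq_or_ne j i
      · simpa using hi
      · simpa [hj] using hun j
    · simp [sum_add_distrib, hur]

theorem sum_mul_le_sSup {ι : Type*} [Fintype ι] [DecidableEq ι] {n m v : ι → ℕ} {r : ℕ}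
    (hvn : v ≤ n) (hvr : ∑ i, v i ≤ r) (hrn : r ≤ ∑ i, n i) :
    ∑ i, m i * v i ≤
      sSup {k : ℕ | ∃ u : ι → ℕ, (∀ i, u i ≤ n i) ∧ (∑ i, u i = r) ∧ k = ∑ i, m i * u i} := by
  obtain ⟨u, hvu, hun, hur⟩ := exists_le_le_sum_eq hvn hvr hrn
  refine (sum_le_sum fun i _ => Nat.mul_le_mul_left (m i) (hvu i)).trans
    (le_csSup ⟨∑ i, m i * n i, ?_⟩ ⟨u, hun, hur, rfl⟩)
  rintro _ ⟨w, hw, -, rfl⟩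
  exact sum_le_sum fun i _ => Nat.mul_le_mul_left _ (hw i)

namespace Matrix

section Det

variable {F ι : Type*} [Field F] [Fintype ι] [DecidableEq ι]

theorem BlockTriangular.det_eq_prod_diag_of_injective {κ : Type*} [LinearOrder κ]
    {M : Matrix ι ι F} {b : ι → κ} (hM : M.BlockTriangular b) (hb : Injective b) :
    M.det = ∏ i, M i i := by
  classical
  rw [hM.det, prod_image fun i _ j _ h => hb h]
  refine prod_congr rfl fun i _ => ?_
  let : Unique {j // b j = b i} := ⟨⟨⟨i, rfl⟩⟩, fun j => Subtype.ext (hb j.2)⟩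
  exact (det_unique _).trans rfl

/-- The rows are fixed one at a time: row `a` of `D + x • B a` is affine in `x` with slope
`B a a`, while the earlier rows do not move. -/
theorem exists_det_sum_smul_ne_zero [LinearOrder ι] (B : ι → Matrix ι ι F)
    (hB : ∀ v s, s < v → B v s = 0) (hdiag : (of fun s => B s s).det ≠ 0) :
    ∃ c : ι → F, (∑ v, c v • B v).det ≠ 0 := by
  let A : Matrix ι ι F := of fun s => B s s
  let H (D : Matrix ι ι F) (T : Finset ι) : Matrix ι ι F :=
    of fun s => if s ∈ T then D s else A s
  suffices ∀ T, ∃ D ∈ Submodule.span F (Set.range B), (H D T).det ≠ 0 by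
    obtain ⟨D, hD, hdet⟩ := this univ
    obtain ⟨c, rfl⟩ := (Submodule.mem_span_range_iff_exists_fun F).1 hD
    exact ⟨c, by convert hdet; ext; simp [H]⟩
  intro T
  induction T using Finset.induction_on_max with
  | empty => exact ⟨0, zero_mem _, by convert hdiag; ext; simp [A]⟩
  | insert a T haT ih =>
    obtain ⟨D, hD, hdet⟩ := ih
    have haT' : a ∉ T := fun h => lt_irrefl a (haT a h)
    have hrow (x : F) : H (D + x • B a) (insert a T) = (H D T).updateRow a (D a + x • A a) := by
      ext s u
      by_cases hs : s = a
      · subst hs; simp [H, A, haT']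
      · by_cases hsT : s ∈ T
        · simp [H, hs, hsT, hB a s (haT s hsT)]
        · simp [H, hs, hsT]
    have hdet_row (x : F) : (H (D + x • B a) (insert a T)).det
        = ((H D T).updateRow a (D a)).det + x * (H D T).det := by
      rw [hrow, det_updateRow_add, det_updateRow_smul]
      have hAa : A a = H D T a := by ext; simp [H, haT']
      rw [hAa, updateRow_eq_self]
    have hmem (x : F) : D + x • B a ∈ Submodule.span F (Set.range B) :=
      add_mem hD (Submodule.smul_mem _ _ (Submodule.subset_span ⟨a, rfl⟩))
    refine ⟨_, hmem ((1 - ((H D T).updateRow a (D a)).det) / (H D T).det), ?_⟩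
    rw [hdet_row, div_mul_cancel₀ _ hdet]
    simp

end Det

section Rank

variable {F ι : Type*} [Field F] [DecidableEq ι]
  {m' n' : ι → Type*} [∀ i, Fintype (m' i)] [∀ i, Fintype (n' i)]
  [∀ i, DecidableEq (m' i)] [∀ i, DecidableEq (n' i)]

theorem rank_add_le {m n : Type*} [Fintype n] (A B : Matrix m n F) :
    (A + B).rank ≤ A.rank + B.rank := by
  rw [rank, rank, rank, mulVecLin_add]
  exact (Submodule.finrank_mono (LinearMap.range_add_le _ _)).trans
    (Submodule.finrank_add_le_finrank_add_finrank _ _)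

theorem blockDiagonal'_pi_single (i : ι) (Y : Matrix (m' i) (n' i) F) :
    blockDiagonal' (Pi.single i Y) =
      (1 : Matrix (Σ j, m' j) (Σ j, m' j) F).submatrix id (Sigma.mk i) * Y *
        (1 : Matrix (Σ j, n' j) (Σ j, n' j) F).submatrix (Sigma.mk i) id := by
  ext ⟨j, a⟩ ⟨k, b⟩
  simp only [blockDiagonal'_apply, mul_apply, submatrix_apply, one_apply, id_eq]
  obtain rfl | hj := eq_or_ne j i
  · obtain rfl | hk := eq_or_ne k j
    · simp [Finset.sum_ite_eq, Finset.sum_ite_eq']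
    · simp [hk.symm]
  · simp [hj]

theorem rank_blockDiagonal'_pi_single_le [Fintype ι] (i : ι) (Y : Matrix (m' i) (n' i) F) :
    (blockDiagonal' (Pi.single i Y)).rank ≤ Y.rank := by
  rw [blockDiagonal'_pi_single]
  exact (rank_mul_le_left _ _).trans (rank_mul_le_right _ _)

theorem rank_blockDiagonal'_le [Fintype ι] (X : ∀ i, Matrix (m' i) (n' i) F) :
    (blockDiagonal' X).rank ≤ ∑ i, (X i).rank := by
  have hX : blockDiagonal' X = ∑ i, blockDiagonal' (Pi.single i (X i)) := by
    conv_lhs => rw [← Finset.univ_sum_single X]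
    exact map_sum (blockDiagonal'AddMonoidHom m' n' F) _ _
  rw [hX]
  exact (le_sum_of_subadditive (rank : Matrix (Σ i, m' i) (Σ i, n' i) F → ℕ) rank_zero.le
    rank_add_le _ _).trans (sum_le_sum fun i _ => rank_blockDiagonal'_pi_single_le i (X i))

end Rank

end Matrix

namespace Submodule

variable {F α β : Type*} [Field F] [LinearOrder α] [LinearOrder β]

def IsPivot (V : Submodule F (Matrix α β F)) (p : α × β) : Prop :=
  ∃ X ∈ V, X p.1 p.2 ≠ 0 ∧ ∀ q : α × β, toLex q < toLex p → X q.1 q.2 = 0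

variable {V : Submodule F (Matrix α β F)}

theorem exists_det_submatrix_ne_zero {ι : Type*} [Fintype ι] [DecidableEq ι] [LinearOrder ι]
    {e : ι → α × β} (he : StrictMono (toLex ∘ e)) (hrow : Injective (Prod.fst ∘ e))
    (hcol : Injective (Prod.snd ∘ e)) (hpiv : ∀ s, V.IsPivot (e s)) :
    ∃ X ∈ V, (X.submatrix (Prod.fst ∘ e) (Prod.snd ∘ e)).det ≠ 0 := by
  have hwit (s : ι) : ∃ Y ∈ V, Y (e s).1 (e s).2 = 1 ∧
      ∀ q : α × β, toLex q < toLex (e s) → Y q.1 q.2 = 0 := by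
    obtain ⟨Y, hY, hY0, hYlt⟩ := hpiv s
    exact ⟨(Y (e s).1 (e s).2)⁻¹ • Y, V.smul_mem _ hY, by simp [hY0],
      fun q hq => by simp [hYlt q hq]⟩
  choose Y hYV hY1 hY0 using hwit
  -- For `s < v` the whole row `(e s).1` precedes the pivot `e v`, and so does the part of row
  -- `(e v).1` left of `(e v).2`; hence `hB` and `hA`.
  let B s := (Y s).submatrix (Prod.fst ∘ e) (Prod.snd ∘ e)
  have hB (v s : ι) (hsv : s < v) : B v s = 0 := by
    have hlt : (e s).1 < (e v).1 :=
      (Prod.Lex.monotone_fst _ _ (he hsv).le).lt_of_ne (hrow.ne hsv.ne)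
    ext u
    exact hY0 v ((e s).1, (e u).2) (Prod.Lex.toLex_lt_toLex.2 (Or.inl hlt))
  have hA : (Matrix.of fun s => B s s).BlockTriangular (Prod.snd ∘ e) := fun s u hus =>
    hY0 s ((e s).1, (e u).2) (Prod.Lex.toLex_lt_toLex.2 (Or.inr ⟨rfl, hus⟩))
  have hdet : (Matrix.of fun s => B s s).det ≠ 0 := by
    simp [hA.det_eq_prod_diag_of_injective hcol, B, hY1]
  obtain ⟨c, hc⟩ := Matrix.exists_det_sum_smul_ne_zero B hB hdet
  refine ⟨∑ v, c v • Y v, sum_mem fun v _ => V.smul_mem _ (hYV v), ?_⟩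
  convert hc
  ext
  simp [B, Matrix.sum_apply]

variable [Fintype β]

theorem exists_card_le_rank_of_isMatching {S : Finset (α × β)} (hSV : ∀ p ∈ S, V.IsPivot p)
    (hS : S.IsMatching) : ∃ X ∈ V, #S ≤ X.rank := by
  classical
  let e := (S.map toLex.toEmbedding).orderEmbOfFin (card_map _)
  have heS (s) : ofLex (e s) ∈ S := by
    simpa using (S.map toLex.toEmbedding).orderEmbOfFin_mem (card_map _) s
  obtain ⟨X, hXV, hX⟩ := exists_det_submatrix_ne_zero (e := ofLex ∘ e) e.strictMono
    (fun s t h => e.injective (hS.1 (heS s) (heS t) h))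
    (fun s t h => e.injective (hS.2 (heS s) (heS t) h)) fun s => hSV _ (heS s)
  refine ⟨X, hXV, ?_⟩
  calc #S = (X.submatrix _ _).rank := by
        rw [Matrix.rank_of_isUnit _ ((Matrix.isUnit_iff_isUnit_det _).2 hX.isUnit),
          Fintype.card_fin]
    _ ≤ X.rank := Matrix.rank_submatrix_le _ _ _

variable [Fintype α] (V)

open Classical in
noncomputable def pivots : Finset (α × β) := univ.filter V.IsPivot

theorem mem_pivots {p : α × β} : p ∈ V.pivots ↔ V.IsPivot p := by
  simp [pivots]

theorem exists_isPivot_of_ne_zero {X : Matrix α β F} (hX : X ∈ V) (hX0 : X ≠ 0) :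
    ∃ p, V.IsPivot p ∧ X p.1 p.2 ≠ 0 := by
  classical
  have hsupp : (univ.filter fun p : α × β => X p.1 p.2 ≠ 0).Nonempty := by
    contrapose! hX0
    ext i j
    simpa using filter_eq_empty_iff.1 hX0 (mem_univ (i, j))
  obtain ⟨p, hp, hmin⟩ := exists_min_image _ toLex hsupp
  have hXp : X p.1 p.2 ≠ 0 := (mem_filter.1 hp).2
  refine ⟨p, ⟨X, hX, hXp, fun q hq => ?_⟩, hXp⟩
  by_contra hXq
  exact (hmin q (mem_filter.2 ⟨mem_univ q, hXq⟩)).not_gt hq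

theorem finrank_le_card_pivots : Module.finrank F V ≤ #V.pivots := by
  let L : V →ₗ[F] V.pivots → F :=
    { toFun X p := (X : Matrix α β F) p.1.1 p.1.2
      map_add' _ _ := rfl
      map_smul' _ _ := rfl }
  have hL : Injective L := by
    refine (injective_iff_map_eq_zero L).2 fun X hX => ?_
    by_contra hX0
    obtain ⟨p, hp, hXp⟩ := V.exists_isPivot_of_ne_zero X.2 (by simpa using hX0)
    exact hXp (congrFun hX ⟨p, (mem_pivots V).2 hp⟩)
  simpa using LinearMap.finrank_le_finrank_of_injective hL

end Submodule

section BlockDiagonalLex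

variable {F ι : Type*} [Field F] {m' n' : ι → Type*}

def blockPos (x : Σ i, m' i × n' i) : (Σₗ i, m' i) × (Σₗ i, n' i) :=
  (toLex ⟨x.1, x.2.1⟩, toLex ⟨x.1, x.2.2⟩)

theorem blockPos_injective : Injective (blockPos (m' := m') (n' := n')) := by
  rintro ⟨i, a, b⟩ ⟨j, c, d⟩ h
  simp only [blockPos, Prod.mk.injEq, EmbeddingLike.apply_eq_iff_eq, Sigma.mk.injEq] at h
  obtain ⟨⟨rfl, hac⟩, -, hbd⟩ := h
  rw [eq_of_heq hac, eq_of_heq hbd]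

variable [DecidableEq ι]

/-- The lexicographic orders only serve to make rows and columns linearly ordered. -/
noncomputable def blockDiagonalLex :
    (∀ i, Matrix (m' i) (n' i) F) →ₗ[F] Matrix (Σₗ i, m' i) (Σₗ i, n' i) F where
  toFun X := (Matrix.blockDiagonal' X).submatrix ofLex ofLex
  map_add' X Y := by ext; simp [Matrix.blockDiagonal'_add]
  map_smul' c X := by ext; simp [Matrix.blockDiagonal'_smul]

theorem blockDiagonalLex_injective :
    Injective (blockDiagonalLex (F := F) (m' := m') (n' := n')) := by
  intro X Y h
  funext i
  ext a b
  simpa [blockDiagonalLex] using congrFun (congrFun h (toLex ⟨i, a⟩)) (toLex ⟨i, b⟩)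

theorem mem_range_blockPos_of_blockDiagonalLex_ne_zero {X : ∀ i, Matrix (m' i) (n' i) F}
    {p : (Σₗ i, m' i) × (Σₗ i, n' i)} (hp : blockDiagonalLex X p.1 p.2 ≠ 0) :
    p ∈ Set.range blockPos := by
  obtain ⟨⟨i, a⟩, ⟨j, b⟩⟩ := p
  obtain rfl | hij := eq_or_ne i j
  · exact ⟨⟨i, a, b⟩, rfl⟩
  · exact absurd (Matrix.blockDiagonal'_apply_ne X a b hij) hp

variable [Fintype ι] [∀ i, DecidableEq (m' i)] [∀ i, DecidableEq (n' i)]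

theorem Finset.IsMatching.image_blockPos {S : ∀ i, Finset (m' i × n' i)}
    (hS : ∀ i, (S i).IsMatching) : ((univ.sigma S).image blockPos).IsMatching := by
  constructor <;>
  · rintro _ hx _ hy hxy
    obtain ⟨⟨i, p⟩, hp, rfl⟩ := mem_image.1 hx
    obtain ⟨⟨j, q⟩, hq, rfl⟩ := mem_image.1 hy
    simp only [blockPos, EmbeddingLike.apply_eq_iff_eq, Sigma.mk.injEq] at hxy
    obtain ⟨rfl, hpq⟩ := hxy
    obtain rfl : p = q := by
      first
      | exact (hS i).1 (mem_sigma.1 hp).2 (mem_sigma.1 hq).2 (eq_of_heq hpq)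
      | exact (hS i).2 (mem_sigma.1 hp).2 (mem_sigma.1 hq).2 (eq_of_heq hpq)
    rfl

theorem rank_blockDiagonalLex_le [∀ i, Fintype (m' i)] [∀ i, Fintype (n' i)]
    (X : ∀ i, Matrix (m' i) (n' i) F) : (blockDiagonalLex X).rank ≤ ∑ i, (X i).rank :=
  (Matrix.rank_submatrix_le _ _ _).trans (Matrix.rank_blockDiagonal'_le X)

end BlockDiagonalLex

section BlockPivots

variable {F ι : Type*} [Field F] [LinearOrder ι] {m' n' : ι → Type*}
  [∀ i, LinearOrder (m' i)] [∀ i, LinearOrder (n' i)] [∀ i, Fintype (m' i)] [∀ i, Fintype (n' i)]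

open Classical in
noncomputable def blockPivots (V : Submodule F (Matrix (Σₗ i, m' i) (Σₗ i, n' i) F)) (i : ι) :
    Finset (m' i × n' i) :=
  univ.filter fun p => V.IsPivot (blockPos ⟨i, p⟩)

theorem mem_blockPivots {V : Submodule F (Matrix (Σₗ i, m' i) (Σₗ i, n' i) F)} {i : ι}
    {p : m' i × n' i} : p ∈ blockPivots V i ↔ V.IsPivot (blockPos ⟨i, p⟩) := by
  simp [blockPivots]

variable [Fintype ι] (C : Submodule F (∀ i, Matrix (m' i) (n' i) F))

theorem card_pivots_le_sum_card_blockPivots :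
    #(C.map blockDiagonalLex).pivots ≤ ∑ i, #(blockPivots (C.map blockDiagonalLex) i) := by
  set V := C.map blockDiagonalLex
  suffices V.pivots ⊆ (univ.sigma (blockPivots V)).image blockPos from
    (card_le_card this).trans (card_image_le.trans_eq (card_sigma _ _))
  intro p hp
  obtain ⟨Y, hYV, hYp, -⟩ := (V.mem_pivots).1 hp
  obtain ⟨X, -, rfl⟩ := Submodule.mem_map.1 hYV
  obtain ⟨x, rfl⟩ := mem_range_blockPos_of_blockDiagonalLex_ne_zero hYp
  exact mem_image_of_mem _
    (mem_sigma.2 ⟨mem_univ _, mem_blockPivots.2 ((V.mem_pivots).1 hp)⟩)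

theorem exists_sum_card_le_sum_rank {S : ∀ i, Finset (m' i × n' i)}
    (hSP : ∀ i, S i ⊆ blockPivots (C.map blockDiagonalLex) i) (hS : ∀ i, (S i).IsMatching) :
    ∃ X ∈ C, ∑ i, #(S i) ≤ ∑ i, (X i).rank := by
  obtain ⟨Y, hYV, hY⟩ := (C.map blockDiagonalLex).exists_card_le_rank_of_isMatching
    (S := (univ.sigma S).image blockPos) (fun p hp => by
      obtain ⟨⟨i, q⟩, hq, rfl⟩ := mem_image.1 hp
      exact mem_blockPivots.1 (hSP i (mem_sigma.1 hq).2))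
    (Finset.IsMatching.image_blockPos hS)
  obtain ⟨X, hXC, rfl⟩ := Submodule.mem_map.1 hYV
  rw [card_image_of_injective _ blockPos_injective, card_sigma] at hY
  exact ⟨X, hXC, hY.trans (rank_blockDiagonalLex_le X)⟩

end BlockPivots

theorem linear_anticode_bound_general {F : Type*} [Field F] {t : ℕ}
    (n m : Fin t → ℕ) (hnm : ∀ i, n i ≤ m i)
    (r : ℕ) (hr : r ≤ ∑ i, n i)
    (C : Submodule F (∀ i : Fin t, Matrix (Fin (n i)) (Fin (m i)) F))
    (hC : ∀ X ∈ C, srk X ≤ r) :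
    Module.finrank F C ≤
      sSup {k : ℕ | ∃ u : Fin t → ℕ,
        (∀ i, u i ≤ n i) ∧ (∑ i, u i = r) ∧ k = ∑ i, m i * u i} := by
  set V := C.map blockDiagonalLex
  choose S hSP hS hPS using fun i =>
    (blockPivots V i).exists_isMatching_card_le_mul (by simpa using hnm i)
  obtain ⟨X, hXC, hX⟩ := exists_sum_card_le_sum_rank C hSP hS
  calc Module.finrank F C = Module.finrank F V :=
        (Submodule.equivMapOfInjective _ blockDiagonalLex_injective C).finrank_eq
    _ ≤ #V.pivots := V.finrank_le_card_pivots
    _ ≤ ∑ i, #(blockPivots V i) := card_pivots_le_sum_card_blockPivots C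
    _ ≤ ∑ i, m i * #(S i) := sum_le_sum fun i _ => (hPS i).trans_eq (by simp [mul_comm])
    _ ≤ _ := sum_mul_le_sSup (fun i => by simpa using (hS i).card_le) (hX.trans (hC X hXC)) hr

/-- Upper bound for linear anticodes in the sum-rank metric: if every element of a
linear subspace C ≤ ⊕ F^{n_i × m_i} has sum-rank at most r (with n_i ≤ m_i), then
dim C ≤ max{ Σ m_i u_i : 0 ≤ u_i ≤ n_i, Σ u_i = r }. -/
theorem linear_anticode_bound {F : Type*} [Field F] {t : ℕ} (ht : 1 ≤ t)
    (n m : Fin t → ℕ) (hn : ∀ i, 1 ≤ n i) (hnm : ∀ i, n i ≤ m i)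
    (r : ℕ) (hr : r ≤ ∑ i, n i)
    (C : Submodule F (∀ i : Fin t, Matrix (Fin (n i)) (Fin (m i)) F))
    (hC : ∀ X ∈ C, srk X ≤ r) :
    Module.finrank F C ≤
      sSup {k : ℕ | ∃ u : Fin t → ℕ,
        (∀ i, u i ≤ n i) ∧ (∑ i, u i = r) ∧ k = ∑ i, m i * u i} :=
  linear_anticode_bound_general n m hnm r hr C hC
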